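/- In the group algebra Q[W] of the hyperoctahedral group of rank n, with x_j (0 <= j <= n) the sum of all signed permutations w with 0 < w(1) < ... < w(j), one has for all 0 <= j,k <= n: x_j * x_k = sum over l from 0 to min(j,k) of (n-j choose k-l)*(n-k choose j-l)*(n-j-k+l)! * 2^(n-j-k+l) * x_l, where terms with n-j-k+l < 0 vanish. -/

import Mathlib

/-!
Write `X_j` for the support of `x_j` (`minReps n j` below). The coefficient of `g` in `x_j x_k`
is the number of `u ∈ X_j` with `u⁻¹ g ∈ X_k`, and `u⁻¹ g ∈ X_k` says that the one-line word of
`u` contains the letters `g(1), …, g(k)` at increasing positions. If `l` of these positions lie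
among the first `j`, where `u` is positive and increasing, they carry `g(1), …, g(l)`, so
`g ∈ X_l`. For fixed `l`, `u` is then determined by its `j - l` other values among the first `j`
entries (avoiding `|g(1)|, …, |g(k)|`), by the `k - l` positions after `j` of
`g(l+1), …, g(k)`, and by its values on the remaining `n + l - j - k` positions; these are chosen
independently in `C(n-k, j-l)`, `C(n-j, k-l)` and `(n+l-j-k)! 2^(n+l-j-k)` ways.
-/

open scoped Classical

def Bgroup (n : ℕ) : Subgroup (Equiv.Perm (Fin n ⊕ Fin n)) where
  carrier := {w | ∀ x, w x.swap = (w x).swap}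
  one_mem' := by intro x; rfl
  mul_mem' := by
    intro a b ha hb x
    simp only [Equiv.Perm.mul_apply, hb x, ha (b x)]
  inv_mem' := by
    intro a ha x
    have h := ha (a⁻¹ x)
    rw [show a (a⁻¹ x) = x from a.apply_symm_apply x] at h
    rw [← h, show ∀ y, a⁻¹ (a y) = y from a.symm_apply_apply]

def bval (n : ℕ) : Fin n ⊕ Fin n → ℤ :=
  Sum.elim (fun i => (i : ℤ) + 1) (fun i => -((i : ℤ) + 1))

def bvalOf (n : ℕ) (w : Equiv.Perm (Fin n ⊕ Fin n)) (i : ℕ) : ℤ :=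
  if h : 1 ≤ i ∧ i ≤ n then bval n (w (Sum.inl ⟨i - 1, by omega⟩)) else 0

noncomputable def xB (n j : ℕ) : MonoidAlgebra ℚ (Bgroup n) :=
  ∑ w ∈ Finset.univ.filter
      (fun w : Bgroup n =>
        ∀ i : ℕ, 1 ≤ i → i ≤ j → bvalOf n (w : Equiv.Perm (Fin n ⊕ Fin n)) (i - 1) <
          bvalOf n (w : Equiv.Perm (Fin n ⊕ Fin n)) i),
    MonoidAlgebra.single w 1

open Equiv Finset Function
open scoped Nat

section Extensions

variable {α β T : Type*} [Fintype α] [DecidableEq α] [Fintype T]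

theorem card_perm_apply_eq_of_embedding (pos : T ↪ α) {τ : T → α} (hτ : Injective τ) :
    #{σ : Perm α | ∀ t, σ (pos t) = τ t} = (Fintype.card α - Fintype.card T)! := by
  let e : {x // x ∈ Set.range pos} ≃ {x // x ∈ Set.range τ} :=
    (ofInjective pos pos.injective).symm.trans (ofInjective τ hτ)
  have hρ (t : T) : e.extendSubtype (pos t) = τ t := by
    rw [extendSubtype_apply_of_mem e _ ⟨t, rfl⟩]
    simp [e, ofInjective_symm_apply]
  calc #{σ : Perm α | ∀ t, σ (pos t) = τ t}
      = #{σ : Perm α | ∀ t, σ (pos t) = pos t} :=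
        card_equiv (Equiv.mulLeft e.extendSubtype⁻¹) fun σ => by simp [symm_apply_eq, hρ]
    _ = Fintype.card (Perm {a // a ∉ Set.range pos}) := by
        rw [← Fintype.card_subtype, Fintype.card_congr (Perm.subtypeEquivSubtypePerm _)]
        exact Fintype.card_congr (subtypeEquivRight fun σ => by simp)
    _ = (Fintype.card α - Fintype.card T)! := by
        rw [Fintype.card_perm, Fintype.card_subtype_compl, Set.card_range_of_injective pos.injective]

theorem card_fun_apply_eq_of_embedding [Fintype β] [DecidableEq β] (pos : T ↪ α) (b : T → β) :
    #{s : α → β | ∀ t, s (pos t) = b t} = Fintype.card β ^ (Fintype.card α - Fintype.card T) := by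
  let s₀ : {x // x ∈ Set.range pos} → β := b ∘ (ofInjective pos pos.injective).symm
  calc #{s : α → β | ∀ t, s (pos t) = b t}
      = Fintype.card {s : α → β // s ∘ Subtype.val = s₀} := by
        rw [← Fintype.card_subtype]
        refine Fintype.card_congr (subtypeEquivRight fun s => ?_)
        simp only [funext_iff, Subtype.forall, comp_apply, s₀]
        refine ⟨fun h a ⟨t, hat⟩ => ?_, fun h t => by simpa using h (pos t) ⟨t, rfl⟩⟩
        subst hat
        simpa using h t
    _ = Fintype.card β ^ (Fintype.card α - Fintype.card T) := by
        rw [Fintype.card_congr (subtypePreimage _ s₀), Fintype.card_fun,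
          Fintype.card_subtype_compl, Set.card_range_of_injective pos.injective]

end Extensions

theorem card_strictMono_fin_mem {α : Type*} [LinearOrder α] [Fintype α] (s : Finset α) (m : ℕ) :
    #{p : Fin m → α | StrictMono p ∧ ∀ r, p r ∈ s} = (#s).choose m := by
  let e : {p : Fin m → α // StrictMono p ∧ ∀ r, p r ∈ s} ≃ (Fin m ↪o s) :=
    { toFun p := OrderEmbedding.ofStrictMono (fun r => ⟨p.1 r, p.2.2 r⟩) fun _ _ h => p.2.1 h
      invFun f := ⟨fun r => f r, fun _ _ h => f.strictMono h, fun r => (f r).2⟩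
      left_inv p := rfl
      right_inv f := rfl }
  rw [← Fintype.card_subtype, Fintype.card_congr e, ← Nat.card_eq_fintype_card,
    Nat.card_congr Set.powersetCard.ofFinEmbEquiv, Set.powersetCard.card,
    Nat.card_eq_fintype_card, Fintype.card_coe]

lemma coeff_sum_single_one {M : Type*} [DecidableEq M] (B : Finset M) (h : M) :
    (∑ v ∈ B, MonoidAlgebra.single v (1 : ℚ)).coeff h = if h ∈ B then 1 else 0 := by
  simp [Finsupp.single_apply]

lemma coeff_sum_single_mul_sum_single {G : Type*} [Group G] [DecidableEq G] (A B : Finset G)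
    (g : G) :
    ((∑ u ∈ A, MonoidAlgebra.single u (1 : ℚ)) * ∑ v ∈ B, MonoidAlgebra.single v 1).coeff g =
      (#{u ∈ A | u⁻¹ * g ∈ B} : ℚ) := by
  rw [sum_mul, MonoidAlgebra.coeff_sum, Finsupp.finsetSum_apply]
  simp_rw [MonoidAlgebra.coeff_single_mul_apply, one_mul, coeff_sum_single_one]
  rw [sum_boole]

namespace Bgroup

variable {n : ℕ}

def unsign : Fin n ⊕ Fin n → Fin n := Sum.elim id id

@[simp] lemma unsign_inl (i : Fin n) : unsign (.inl i) = i := rfl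
@[simp] lemma unsign_inr (i : Fin n) : unsign (.inr i) = i := rfl
@[simp] lemma unsign_swap (x : Fin n ⊕ Fin n) : unsign x.swap = unsign x := by cases x <;> rfl

lemma eq_iff_unsign_and_isRight {x y : Fin n ⊕ Fin n} :
    x = y ↔ unsign x = unsign y ∧ x.isRight = y.isRight := by
  cases x <;> cases y <;> simp

def signed (b : Bool) (i : Fin n) : Fin n ⊕ Fin n := cond b (.inr i) (.inl i)

@[simp] lemma unsign_signed (b : Bool) (i : Fin n) : unsign (signed b i) = i := by
  cases b <;> rfl

@[simp] lemma isRight_signed (b : Bool) (i : Fin n) : (signed b i).isRight = b := by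
  cases b <;> rfl

@[simp] lemma isLeft_signed (b : Bool) (i : Fin n) : (signed b i).isLeft = !b := by
  cases b <;> rfl

lemma apply_swap (u : Bgroup n) (x : Fin n ⊕ Fin n) : u.1 x.swap = (u.1 x).swap := u.2 x

lemma injective_unsign_apply_inl (u : Bgroup n) : Injective fun i => unsign (u.1 (.inl i)) := by
  intro i i' h
  by_cases hs : (u.1 (.inl i)).isRight = (u.1 (.inl i')).isRight
  · simpa using u.1.injective (eq_iff_unsign_and_isRight.2 ⟨h, hs⟩)
  · have : u.1 (.inl i) = u.1 (.inr i') := by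
      rw [← Sum.swap_inl, apply_swap, eq_iff_unsign_and_isRight]
      cases hx : u.1 (.inl i') <;> simp_all
    simpa using u.1.injective this

noncomputable def absPerm (u : Bgroup n) : Perm (Fin n) :=
  ofBijective _ (Finite.injective_iff_bijective.mp (injective_unsign_apply_inl u))

lemma absPerm_apply (u : Bgroup n) (i : Fin n) : absPerm u i = unsign (u.1 (.inl i)) := rfl

def signs (u : Bgroup n) (i : Fin n) : Bool := (u.1 (.inl i)).isRight

lemma apply_inl_eq_iff (u : Bgroup n) (i : Fin n) (x : Fin n ⊕ Fin n) :
    u.1 (.inl i) = x ↔ absPerm u i = unsign x ∧ signs u i = x.isRight :=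
  eq_iff_unsign_and_isRight

lemma apply_inl_eq_inl_iff (u : Bgroup n) (i x : Fin n) :
    u.1 (.inl i) = .inl x ↔ absPerm u i = x ∧ signs u i = false := by
  simp [apply_inl_eq_iff]

lemma absPerm_eq_of_apply_inl {u : Bgroup n} {x y : Fin n} (h : u.1 (.inl y) = .inl x) :
    absPerm u y = x :=
  ((apply_inl_eq_inl_iff _ _ _).1 h).1

noncomputable def ofAbsPermSigns (σ : Perm (Fin n)) (s : Fin n → Bool) : Bgroup n :=
  ⟨ofBijective (fun x => signed (s (unsign x) ^^ x.isRight) (σ (unsign x)))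
      (Finite.injective_iff_bijective.mp fun x y h => by
        rw [eq_iff_unsign_and_isRight] at h ⊢
        simp only [unsign_signed, isRight_signed, σ.injective.eq_iff] at h
        simpa [h.1] using h.2),
    fun x => by
      rw [eq_iff_unsign_and_isRight]
      cases x <;> simp⟩

noncomputable def equivProd : Bgroup n ≃ Perm (Fin n) × (Fin n → Bool) where
  toFun u := (absPerm u, signs u)
  invFun p := ofAbsPermSigns p.1 p.2
  left_inv u := by
    refine Subtype.ext (Equiv.ext fun x => ?_)
    cases x with
    | inl i => simp [ofAbsPermSigns, absPerm, signs, eq_iff_unsign_and_isRight]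
    | inr i =>
      rw [← Sum.swap_inl, apply_swap u]
      simp [ofAbsPermSigns, absPerm, signs, eq_iff_unsign_and_isRight]
  right_inv p := by
    ext <;> simp [ofAbsPermSigns, absPerm, signs]

theorem card_apply_inl_eq {T : Type*} [Fintype T] (pos : T ↪ Fin n)
    (val : T → Fin n ⊕ Fin n) (hval : Injective fun t => unsign (val t)) :
    #{u : Bgroup n | ∀ t, u.1 (.inl (pos t)) = val t} =
      (n - Fintype.card T)! * 2 ^ (n - Fintype.card T) := by
  rw [card_equiv equivProd
      (t := ({σ : Perm (Fin n) | ∀ t, σ (pos t) = unsign (val t)} : Finset _) ×ˢ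
        ({s : Fin n → Bool | ∀ t, s (pos t) = (val t).isRight} : Finset _))
      fun u => by simp [equivProd, apply_inl_eq_iff, forall_and],
    card_product, card_perm_apply_eq_of_embedding pos hval,
    card_fun_apply_eq_of_embedding, Fintype.card_fin, Fintype.card_bool]

noncomputable def minReps (n m : ℕ) : Finset (Bgroup n) :=
  univ.filter fun w : Bgroup n =>
    ∀ i : ℕ, 1 ≤ i → i ≤ m → bvalOf n (w : Perm (Fin n ⊕ Fin n)) (i - 1) <
      bvalOf n (w : Perm (Fin n ⊕ Fin n)) i

lemma xB_eq_sum (n m : ℕ) : xB n m = ∑ w ∈ minReps n m, MonoidAlgebra.single w 1 := rfl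

lemma mem_minReps_iff_lt_succ (u : Bgroup n) (m : ℕ) :
    u ∈ minReps n m ↔ ∀ i < m, bvalOf n u.1 i < bvalOf n u.1 (i + 1) := by
  simp only [minReps, mem_filter, mem_univ, true_and]
  exact ⟨fun h i hi => by simpa using h (i + 1) (by omega) (by omega),
    fun h i h1 h2 => by simpa [Nat.sub_add_cancel h1] using h (i - 1) (by omega)⟩

lemma bvalOf_succ (u : Bgroup n) (i : Fin n) : bvalOf n u.1 (i + 1) =
    if signs u i then -((absPerm u i : ℤ) + 1) else (absPerm u i : ℤ) + 1 := by
  rw [absPerm_apply, signs]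
  cases h : u.1 (.inl i) <;> simp [bvalOf, bval, h]

-- Positions `i : Fin n` are 0-based: `u.1 (.inl i)` is the entry `u(i + 1)` of the paper.
lemma mem_minReps_iff {m : ℕ} (hm : m ≤ n) (u : Bgroup n) :
    u ∈ minReps n m ↔ (∀ i : Fin n, (i : ℕ) < m → u.1 (.inl i) = .inl (absPerm u i)) ∧
      StrictMonoOn (absPerm u) {i | (i : ℕ) < m} := by
  simp only [mem_minReps_iff_lt_succ, apply_inl_eq_inl_iff, true_and]
  constructor
  · intro h
    have hmono : StrictMonoOn (bvalOf n u.1) (Set.Iic m) :=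
      strictMonoOn_Iic_of_lt_succ fun i hi => by simpa using h i hi
    have hsign (i : Fin n) (hi : (i : ℕ) < m) : signs u i = false := by
      have := hmono (a := 0) (by simp) (b := i + 1) (by simp; omega) (by omega)
      rw [bvalOf_succ] at this
      cases hs : signs u i <;> simp [hs, bvalOf] at this ⊢
      omega
    refine ⟨hsign, fun i hi i' hi' hii' => ?_⟩
    have := hmono (a := i + 1) (by simp at hi ⊢; omega) (b := i' + 1) (by simp at hi' ⊢; omega)
      (by simpa using hii')
    simpa [bvalOf_succ, hsign i hi, hsign i' hi'] using this
  · rintro ⟨hsign, hmono⟩ i hi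
    have hval (i : ℕ) (hi : i < m) :
        bvalOf n u.1 (i + 1) = (absPerm u ⟨i, by omega⟩ : ℤ) + 1 := by
      simpa [hsign ⟨i, by omega⟩ hi] using bvalOf_succ u ⟨i, by omega⟩
    rcases i with _ | i
    · rw [hval 0 hi]
      simp [bvalOf]
    · rw [hval i (by omega), hval (i + 1) hi]
      have := hmono (a := ⟨i, by omega⟩) (by simp; omega) (b := ⟨i + 1, by omega⟩)
        (by simpa using hi) (Fin.mk_lt_mk.mpr (by omega))
      rw [Fin.lt_def] at this
      omega

lemma mem_minReps_of_apply_inl {m : ℕ} (hm : m ≤ n) {u : Bgroup n} {f : Fin m → Fin n}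
    (hf : StrictMono f) (h : ∀ i, u.1 (.inl (Fin.castLE hm i)) = .inl (f i)) :
    u ∈ minReps n m := by
  have habs (i : Fin n) (hi : (i : ℕ) < m) : u.1 (.inl i) = .inl (f ⟨i, hi⟩) := h ⟨i, hi⟩
  rw [mem_minReps_iff hm]
  refine ⟨fun i hi => by rw [habs i hi, absPerm_eq_of_apply_inl (habs i hi)],
    fun i hi i' hi' hii' => ?_⟩
  rw [absPerm_eq_of_apply_inl (habs i hi), absPerm_eq_of_apply_inl (habs i' hi')]
  exact hf (Fin.mk_lt_mk.mpr hii')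

-- When `u⁻¹ * g ∈ X_k`, the letter `g(y + 1)` (for `y < k`) sits at position
-- `absPerm (u⁻¹ * g) y` of `u`; these positions increase with `y`.
lemma apply_inl_absPerm_inv_mul {g u : Bgroup n} {k : ℕ} (hk : k ≤ n)
    (hv : u⁻¹ * g ∈ minReps n k) {y : Fin n} (hy : (y : ℕ) < k) :
    u.1 (.inl (absPerm (u⁻¹ * g) y)) = g.1 (.inl y) := by
  have := ((mem_minReps_iff hk _).1 hv).1 y hy
  rw [Subgroup.coe_mul, Subgroup.coe_inv, Perm.mul_apply, Perm.inv_eq_iff_eq] at this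
  exact this.symm

lemma absPerm_absPerm_inv_mul {g u : Bgroup n} {k : ℕ} (hk : k ≤ n)
    (hv : u⁻¹ * g ∈ minReps n k) {y : Fin n} (hy : (y : ℕ) < k) :
    absPerm u (absPerm (u⁻¹ * g) y) = absPerm g y := by
  rw [absPerm_apply u, apply_inl_absPerm_inv_mul hk hv hy, absPerm_apply]

lemma inv_mul_apply_inl_of_apply_inl {g u : Bgroup n} {x y : Fin n}
    (h : u.1 (.inl x) = g.1 (.inl y)) : (u⁻¹ * g).1 (.inl y) = .inl x := by
  rw [Subgroup.coe_mul, Subgroup.coe_inv, Perm.mul_apply, ← h]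
  simp

def initSeg (n m : ℕ) : Finset (Fin n) := {i | (i : ℕ) < m}

@[simp] lemma mem_initSeg {m : ℕ} {i : Fin n} : i ∈ initSeg n m ↔ (i : ℕ) < m := by
  simp [initSeg]

lemma card_initSeg {m : ℕ} (hm : m ≤ n) : #(initSeg n m) = m := by
  simp [initSeg, Fin.card_filter_val_lt, hm]

noncomputable def initVals (g : Bgroup n) (m : ℕ) : Finset (Fin n) :=
  (initSeg n m).image (absPerm g)

lemma card_initVals (g : Bgroup n) {m : ℕ} (hm : m ≤ n) : #(initVals g m) = m := by
  rw [initVals, card_image_of_injective _ (absPerm g).injective, card_initSeg hm]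

lemma initVals_mono (g : Bgroup n) {l m : ℕ} (h : l ≤ m) : initVals g l ⊆ initVals g m :=
  image_subset_image fun i => by simp only [mem_initSeg]; omega

section Decomposition

variable {j k : ℕ} {g u : Bgroup n}

noncomputable def overlapLen (j k : ℕ) (g u : Bgroup n) : ℕ :=
  #{y : Fin n | (y : ℕ) < k ∧ (absPerm (u⁻¹ * g) y : ℕ) < j}

noncomputable def extraVals (j l : ℕ) (g u : Bgroup n) : Finset (Fin n) :=
  (initSeg n j).image (absPerm u) \ initVals g l

noncomputable def latePos (hk : k ≤ n) (l : ℕ) (g u : Bgroup n) (r : Fin (k - l)) : Fin n :=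
  absPerm (u⁻¹ * g) ⟨l + r, by omega⟩

lemma lt_overlapLen_iff (hk : k ≤ n) (hv : u⁻¹ * g ∈ minReps n k) (y : Fin n) :
    (y : ℕ) < overlapLen j k g u ↔ (y : ℕ) < k ∧ (absPerm (u⁻¹ * g) y : ℕ) < j := by
  have hmono := ((mem_minReps_iff hk _).1 hv).2.monotoneOn
  refine Fin.lt_card_filter_univ_iff_apply_of_imp _ fun i i' hi'i ⟨hi, hqi⟩ => ⟨by omega, ?_⟩
  exact lt_of_le_of_lt (hmono (by simp; omega) (by simpa using hi) hi'i) hqi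

lemma overlapLen_le (hj : j ≤ n) (hk : k ≤ n) : overlapLen j k g u ≤ min j k := by
  refine le_min ?_ ?_
  · calc overlapLen j k g u ≤ #(initSeg n j) :=
          card_le_card_of_injOn (absPerm (u⁻¹ * g)) (fun y hy => by simp at hy ⊢; exact hy.2)
            (absPerm _).injective.injOn
      _ = j := card_initSeg hj
  · calc overlapLen j k g u ≤ #(initSeg n k) :=
          card_le_card fun y hy => by simp at hy ⊢; exact hy.1
      _ = k := card_initSeg hk

lemma mem_minReps_overlapLen (hj : j ≤ n) (hk : k ≤ n) (hu : u ∈ minReps n j)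
    (hv : u⁻¹ * g ∈ minReps n k) : g ∈ minReps n (overlapLen j k g u) := by
  have hl := (overlapLen_le (g := g) (u := u) hj hk).trans (min_le_right _ _)
  obtain ⟨hupos, humono⟩ := (mem_minReps_iff hj u).1 hu
  have hvmono := ((mem_minReps_iff hk _).1 hv).2
  rw [mem_minReps_iff (hl.trans hk)]
  refine ⟨fun y hy => ?_, fun y hy y' hy' hyy' => ?_⟩
  · obtain ⟨hyk, hqy⟩ := (lt_overlapLen_iff hk hv y).1 hy
    rw [← apply_inl_absPerm_inv_mul hk hv hyk, hupos _ hqy, absPerm_absPerm_inv_mul hk hv hyk]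
  · obtain ⟨hyk, hqy⟩ := (lt_overlapLen_iff hk hv y).1 hy
    obtain ⟨hyk', hqy'⟩ := (lt_overlapLen_iff hk hv y').1 hy'
    rw [← absPerm_absPerm_inv_mul hk hv hyk, ← absPerm_absPerm_inv_mul hk hv hyk']
    exact humono hqy hqy' (hvmono hyk hyk' hyy')

lemma initVals_overlapLen_subset (hk : k ≤ n) (hv : u⁻¹ * g ∈ minReps n k) :
    initVals g (overlapLen j k g u) ⊆ (initSeg n j).image (absPerm u) := by
  simp only [initVals, subset_iff, mem_image, mem_initSeg]
  rintro _ ⟨y, hy, rfl⟩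
  obtain ⟨hyk, hqy⟩ := (lt_overlapLen_iff hk hv y).1 hy
  exact ⟨_, hqy, absPerm_absPerm_inv_mul hk hv hyk⟩

lemma extraVals_mem (hj : j ≤ n) (hk : k ≤ n) (hv : u⁻¹ * g ∈ minReps n k) :
    extraVals j (overlapLen j k g u) g u ∈
      (initVals g k)ᶜ.powersetCard (j - overlapLen j k g u) := by
  have hl := overlapLen_le (g := g) (u := u) hj hk
  rw [mem_powersetCard, extraVals, card_sdiff_of_subset (initVals_overlapLen_subset hk hv),
    card_image_of_injective _ (absPerm u).injective, card_initSeg hj, card_initVals g (by omega)]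
  refine ⟨fun x hx => ?_, rfl⟩
  simp only [initVals, mem_sdiff, mem_image, mem_initSeg, mem_compl] at hx ⊢
  rintro ⟨y, hyk, rfl⟩
  obtain ⟨⟨i, hi, hiy⟩, hnot⟩ := hx
  rw [← absPerm_absPerm_inv_mul hk hv hyk, (absPerm u).injective.eq_iff] at hiy
  exact hnot ⟨y, (lt_overlapLen_iff hk hv y).2 ⟨hyk, hiy ▸ hi⟩, rfl⟩

lemma latePos_mem (hk : k ≤ n) (hv : u⁻¹ * g ∈ minReps n k) :
    latePos hk (overlapLen j k g u) g u ∈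
      ({p | StrictMono p ∧ ∀ r, p r ∈ (initSeg n j)ᶜ} :
        Finset (Fin (k - overlapLen j k g u) → Fin n)) := by
  have hvmono := ((mem_minReps_iff hk _).1 hv).2
  simp only [mem_filter, mem_univ, true_and, mem_compl, mem_initSeg, latePos]
  refine ⟨fun r r' hrr' => hvmono (by simp; omega) (by simp; omega) (by simpa using hrr'),
    fun r hr => ?_⟩
  simpa using (lt_overlapLen_iff hk hv _).2 ⟨by simp; omega, hr⟩

/-- The fibre of `u ↦ (overlapLen, extraVals, latePos)` over `(l, S, p)`, described by the
values it prescribes at the positions `0, …, j - 1` and `p 0, …, p (k - l - 1)`. -/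
def FibreCond (g : Bgroup n) (hj : j ≤ n) (hk : k ≤ n) {l : ℕ} {S : Finset (Fin n)}
    (hR : #(initVals g l ∪ S) = j) (p : Fin (k - l) → Fin n) (u : Bgroup n) : Prop :=
  (∀ i : Fin j, u.1 (.inl (Fin.castLE hj i)) = .inl ((initVals g l ∪ S).orderEmbOfFin hR i)) ∧
  ∀ r : Fin (k - l), u.1 (.inl (p r)) = g.1 (.inl ⟨l + r, by omega⟩)

lemma fibreCond_of_mem (hj : j ≤ n) (hk : k ≤ n) (hu : u ∈ minReps n j)
    (hv : u⁻¹ * g ∈ minReps n k)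
    (hR : #(initVals g (overlapLen j k g u) ∪ extraVals j (overlapLen j k g u) g u) = j) :
    FibreCond g hj hk hR (latePos hk (overlapLen j k g u) g u) u := by
  obtain ⟨hupos, humono⟩ := (mem_minReps_iff hj u).1 hu
  refine ⟨fun i => ?_, fun r => apply_inl_absPerm_inv_mul hk hv (by simp; omega)⟩
  have hsort := orderEmbOfFin_unique hR (f := fun i : Fin j => absPerm u (Fin.castLE hj i))
    (fun i => by
      rw [extraVals, union_sdiff_of_subset (initVals_overlapLen_subset hk hv)]
      exact mem_image_of_mem _ (by simp))
    fun i i' hii' => humono (by simp) (by simp) hii'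
  rw [← hsort, hupos _ (by simp)]

end Decomposition

lemma exists_eq_add_of_le {k l : ℕ} (hk : k ≤ n) {y : Fin n} (hly : l ≤ (y : ℕ))
    (hyk : (y : ℕ) < k) : ∃ r : Fin (k - l), y = ⟨l + r, by omega⟩ :=
  ⟨⟨y - l, by omega⟩, Fin.ext (by simp; omega)⟩

lemma absPerm_notMem_initVals_union {j k l : ℕ} {g : Bgroup n} {S : Finset (Fin n)}
    (hS : S ∈ (initVals g k)ᶜ.powersetCard (j - l)) (hk : k ≤ n) (r : Fin (k - l)) :
    absPerm g ⟨l + r, by omega⟩ ∉ initVals g l ∪ S := by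
  simp only [mem_union, initVals, mem_image, mem_initSeg, (absPerm g).injective.eq_iff, not_or]
  refine ⟨fun ⟨y, hy, hyr⟩ => by rw [hyr] at hy; simp at hy, fun hrS => ?_⟩
  have := (mem_powersetCard.1 hS).1 hrS
  simp only [initVals, mem_compl, mem_image, mem_initSeg] at this
  exact this ⟨_, by simp; omega, rfl⟩

section Fibre

variable {j k l : ℕ} {g u : Bgroup n} {S : Finset (Fin n)} {p : Fin (k - l) → Fin n}
  {hj : j ≤ n} {hk : k ≤ n} {hR : #(initVals g l ∪ S) = j}

namespace FibreCond

lemma mem_minReps (hu : FibreCond g hj hk hR p u) : u ∈ minReps n j :=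
  mem_minReps_of_apply_inl hj (orderEmbOfFin _ hR).strictMono hu.1

lemma inv_mul_apply_early (hg : g ∈ minReps n l) (hl : l ≤ n) (hu : FibreCond g hj hk hR p u)
    {y : Fin n} (hy : (y : ℕ) < l) :
    ∃ i : Fin j, (u⁻¹ * g).1 (.inl y) = .inl (Fin.castLE hj i) ∧
      (initVals g l ∪ S).orderEmbOfFin hR i = absPerm g y := by
  obtain ⟨i, hi⟩ : absPerm g y ∈ Set.range ((initVals g l ∪ S).orderEmbOfFin hR) := by
    rw [range_orderEmbOfFin]
    exact mem_union_left _ (mem_image_of_mem _ (by simpa))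
  refine ⟨i, inv_mul_apply_inl_of_apply_inl ?_, hi⟩
  rw [hu.1, hi, ((mem_minReps_iff hl g).1 hg).1 y hy]

lemma inv_mul_apply_late (hu : FibreCond g hj hk hR p u) (r : Fin (k - l)) :
    (u⁻¹ * g).1 (.inl ⟨l + r, by omega⟩) = .inl (p r) :=
  inv_mul_apply_inl_of_apply_inl (hu.2 r)

lemma absPerm_inv_mul_early (hg : g ∈ minReps n l) (hl : l ≤ n) (hu : FibreCond g hj hk hR p u)
    {y : Fin n} (hy : (y : ℕ) < l) :
    ∃ i : Fin j, absPerm (u⁻¹ * g) y = Fin.castLE hj i ∧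
      (initVals g l ∪ S).orderEmbOfFin hR i = absPerm g y := by
  obtain ⟨i, hi, hsort⟩ := hu.inv_mul_apply_early hg hl hy
  exact ⟨i, absPerm_eq_of_apply_inl hi, hsort⟩

lemma absPerm_inv_mul_late (hu : FibreCond g hj hk hR p u) (r : Fin (k - l)) :
    absPerm (u⁻¹ * g) ⟨l + r, by omega⟩ = p r :=
  absPerm_eq_of_apply_inl (hu.inv_mul_apply_late r)

lemma inv_mul_apply_inl (hg : g ∈ minReps n l) (hlk : l ≤ k) (hu : FibreCond g hj hk hR p u)
    {y : Fin n} (hy : (y : ℕ) < k) :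
    (u⁻¹ * g).1 (.inl y) = .inl (absPerm (u⁻¹ * g) y) := by
  by_cases hyl : (y : ℕ) < l
  · obtain ⟨i, hi, -⟩ := hu.inv_mul_apply_early hg (hlk.trans hk) hyl
    rw [hi, absPerm_eq_of_apply_inl hi]
  · obtain ⟨r, hr⟩ := exists_eq_add_of_le hk (not_lt.1 hyl) hy
    rw [hr, hu.inv_mul_apply_late r, hu.absPerm_inv_mul_late r]

lemma strictMonoOn_absPerm_inv_mul (hg : g ∈ minReps n l) (hlk : l ≤ k)
    (hp : StrictMono p ∧ ∀ r, p r ∈ (initSeg n j)ᶜ) (hu : FibreCond g hj hk hR p u) :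
    StrictMonoOn (absPerm (u⁻¹ * g)) {y | (y : ℕ) < k} := by
  have hln : l ≤ n := hlk.trans hk
  intro y (hy : (y : ℕ) < k) y' (hy' : (y' : ℕ) < k) hyy'
  by_cases hy'l : (y' : ℕ) < l
  · have hyl : (y : ℕ) < l := lt_trans hyy' hy'l
    obtain ⟨i, hi, hsi⟩ := hu.absPerm_inv_mul_early hg hln hyl
    obtain ⟨i', hi', hsi'⟩ := hu.absPerm_inv_mul_early hg hln hy'l
    have : (initVals g l ∪ S).orderEmbOfFin hR i < (initVals g l ∪ S).orderEmbOfFin hR i' := by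
      rw [hsi, hsi']
      exact ((mem_minReps_iff hln g).1 hg).2 hyl hy'l hyy'
    rw [hi, hi']
    exact (Fin.castLE_lt_castLE_iff hj).2 ((OrderEmbedding.lt_iff_lt _).1 this)
  obtain ⟨r', hr'⟩ := exists_eq_add_of_le hk (not_lt.1 hy'l) hy'
  rw [hr', hu.absPerm_inv_mul_late r']
  by_cases hyl : (y : ℕ) < l
  · obtain ⟨i, hi, -⟩ := hu.absPerm_inv_mul_early hg hln hyl
    have := hp.2 r'
    simp only [mem_compl, mem_initSeg, not_lt] at this
    rw [hi, Fin.lt_def, Fin.val_castLE]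
    omega
  · obtain ⟨r, hr⟩ := exists_eq_add_of_le hk (not_lt.1 hyl) hy
    rw [hr, hu.absPerm_inv_mul_late r]
    rw [hr, hr', Fin.mk_lt_mk] at hyy'
    exact hp.1 (Fin.lt_def.2 (by omega))

lemma inv_mul_mem_minReps (hg : g ∈ minReps n l) (hlk : l ≤ k)
    (hp : StrictMono p ∧ ∀ r, p r ∈ (initSeg n j)ᶜ) (hu : FibreCond g hj hk hR p u) :
    u⁻¹ * g ∈ minReps n k :=
  (mem_minReps_iff hk _).2
    ⟨fun _ hy => hu.inv_mul_apply_inl hg hlk hy, hu.strictMonoOn_absPerm_inv_mul hg hlk hp⟩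

lemma overlapLen_eq (hg : g ∈ minReps n l) (hlk : l ≤ k)
    (hp : StrictMono p ∧ ∀ r, p r ∈ (initSeg n j)ᶜ) (hu : FibreCond g hj hk hR p u) :
    overlapLen j k g u = l := by
  have hln : l ≤ n := hlk.trans hk
  rw [overlapLen, ← card_initSeg hln, initSeg]
  congr 1
  ext y
  simp only [mem_filter, mem_univ, true_and]
  refine ⟨fun ⟨hyk, hqy⟩ => not_le.1 fun hly => ?_, fun hyl => ?_⟩
  · obtain ⟨r, hr⟩ := exists_eq_add_of_le hk hly hyk
    rw [hr, hu.absPerm_inv_mul_late r] at hqy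
    simpa [hqy] using hp.2 r
  · obtain ⟨i, hi, -⟩ := hu.absPerm_inv_mul_early hg hln hyl
    exact ⟨by omega, by simp [hi]⟩

lemma extraVals_eq (hlk : l ≤ k) (hS : S ∈ (initVals g k)ᶜ.powersetCard (j - l))
    (hu : FibreCond g hj hk hR p u) : extraVals j l g u = S := by
  have himage : (initSeg n j).image (absPerm u) = initVals g l ∪ S := by
    ext x
    simp only [mem_image, mem_initSeg]
    constructor
    · rintro ⟨i, hi, rfl⟩
      have h : u.1 (.inl i) = _ := hu.1 ⟨i, hi⟩
      rw [absPerm_eq_of_apply_inl h]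
      exact orderEmbOfFin_mem _ _ _
    · intro hx
      obtain ⟨i, rfl⟩ : x ∈ Set.range ((initVals g l ∪ S).orderEmbOfFin hR) := by
        rwa [range_orderEmbOfFin]
      exact ⟨Fin.castLE hj i, by simp, absPerm_eq_of_apply_inl (hu.1 i)⟩
  rw [extraVals, himage, union_sdiff_cancel_left
    (disjoint_compl_right.mono (initVals_mono g hlk) (mem_powersetCard.1 hS).1)]

lemma latePos_eq (hu : FibreCond g hj hk hR p u) : latePos hk l g u = p :=
  funext hu.absPerm_inv_mul_late

end FibreCond

lemma card_fibreCond (hS : S ∈ (initVals g k)ᶜ.powersetCard (j - l))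
    (hp : StrictMono p ∧ ∀ r, p r ∈ (initSeg n j)ᶜ) (hlk : l ≤ k) :
    #{u | FibreCond g hj hk hR p u} = (n + l - j - k)! * 2 ^ (n + l - j - k) := by
  have hpos : Injective (Sum.elim (Fin.castLE hj) p) :=
    (Fin.castLE_injective hj).sumElim hp.1.injective fun i r h => by simpa [← h] using hp.2 r
  have hval : Injective fun t => unsign (Sum.elim
      (fun i => .inl ((initVals g l ∪ S).orderEmbOfFin hR i))
      (fun r : Fin (k - l) => g.1 (.inl ⟨l + r, by omega⟩)) t) := by
    rintro (i | r) (i' | r') h <;>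
      simp only [Sum.elim_inl, Sum.elim_inr, unsign_inl, ← absPerm_apply] at h
    · exact (orderEmbOfFin _ hR).injective h ▸ rfl
    · exact (absPerm_notMem_initVals_union hS hk r' (h ▸ orderEmbOfFin_mem _ hR i)).elim
    · exact (absPerm_notMem_initVals_union hS hk r (h ▸ orderEmbOfFin_mem _ hR i')).elim
    · simpa [Fin.ext_iff] using h
  rw [show n + l - j - k = n - Fintype.card (Fin j ⊕ Fin (k - l)) by simp; omega,
    ← card_apply_inl_eq ⟨_, hpos⟩ _ hval]
  exact congrArg card (filter_congr fun u _ => by simp [FibreCond, Sum.forall])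

lemma filter_eq_fibreCond (hg : g ∈ minReps n l) (hlk : l ≤ k)
    (hS : S ∈ (initVals g k)ᶜ.powersetCard (j - l))
    (hp : StrictMono p ∧ ∀ r, p r ∈ (initSeg n j)ᶜ) :
    {u ∈ {u ∈ {u ∈ minReps n j | u⁻¹ * g ∈ minReps n k} | overlapLen j k g u = l} |
      (extraVals j l g u, latePos hk l g u) = (S, p)} =
      ({u | FibreCond g hj hk hR p u} : Finset (Bgroup n)) := by
  refine Finset.ext fun u => ?_
  simp only [mem_filter, mem_univ, true_and]
  rw [Prod.mk.injEq]
  constructor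
  · rintro ⟨⟨⟨hu, hv⟩, rfl⟩, rfl, rfl⟩
    exact fibreCond_of_mem hj hk hu hv hR
  · intro hu
    exact ⟨⟨⟨hu.mem_minReps, hu.inv_mul_mem_minReps hg hlk hp⟩, hu.overlapLen_eq hg hlk hp⟩,
      hu.extraVals_eq hlk hS, hu.latePos_eq⟩

end Fibre

variable {j k : ℕ}

lemma card_fibre (hj : j ≤ n) (hk : k ≤ n) {g : Bgroup n} {l : ℕ} (hg : g ∈ minReps n l)
    (hl : l ≤ min j k) {S : Finset (Fin n)} (hS : S ∈ (initVals g k)ᶜ.powersetCard (j - l))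
    {p : Fin (k - l) → Fin n} (hp : StrictMono p ∧ ∀ r, p r ∈ (initSeg n j)ᶜ) :
    #{u ∈ {u ∈ {u ∈ minReps n j | u⁻¹ * g ∈ minReps n k} | overlapLen j k g u = l} |
      (extraVals j l g u, latePos hk l g u) = (S, p)} = (n + l - j - k)! * 2 ^ (n + l - j - k) := by
  have hlk : l ≤ k := hl.trans (min_le_right _ _)
  have hR : #(initVals g l ∪ S) = j := by
    rw [card_union_of_disjoint (disjoint_compl_right.mono (initVals_mono g hlk)
        (mem_powersetCard.1 hS).1), card_initVals g (hlk.trans hk), (mem_powersetCard.1 hS).2]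
    omega
  rw [filter_eq_fibreCond hg hlk hS hp (hj := hj) (hR := hR), card_fibreCond hS hp hlk]

lemma card_filter_overlapLen_eq (hj : j ≤ n) (hk : k ≤ n) (g : Bgroup n) {l : ℕ}
    (hl : l ≤ min j k) :
    #{u ∈ {u ∈ minReps n j | u⁻¹ * g ∈ minReps n k} | overlapLen j k g u = l} =
      if g ∈ minReps n l then
        (n - j).choose (k - l) * (n - k).choose (j - l) * (n + l - j - k)! * 2 ^ (n + l - j - k)
      else 0 := by
  split_ifs with hg
  · rw [card_eq_sum_card_fiberwise (f := fun u => (extraVals j l g u, latePos hk l g u))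
      (t := (initVals g k)ᶜ.powersetCard (j - l) ×ˢ
        ({p | StrictMono p ∧ ∀ r, p r ∈ (initSeg n j)ᶜ} : Finset (Fin (k - l) → Fin n)))
      fun u hu => ?_]
    · rw [sum_const_nat fun Sp hSp => card_fibre hj hk hg hl (mem_product.1 hSp).1
          (mem_filter.1 (mem_product.1 hSp).2).2, card_product, card_powersetCard, card_compl,
        card_initVals g hk, card_strictMono_fin_mem, card_compl, card_initSeg hj, Fintype.card_fin]
      ring
    · rw [mem_coe, mem_filter, mem_filter] at hu
      obtain ⟨⟨-, hv⟩, rfl⟩ := hu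
      exact mem_product.2 ⟨extraVals_mem hj hk hv, latePos_mem hk hv⟩
  · rw [card_eq_zero, filter_eq_empty_iff]
    rintro u hu rfl
    exact hg (mem_minReps_overlapLen hj hk (mem_filter.1 hu).1 (mem_filter.1 hu).2)

theorem card_inv_mul_mem_minReps (hj : j ≤ n) (hk : k ≤ n) (g : Bgroup n) :
    #{u ∈ minReps n j | u⁻¹ * g ∈ minReps n k} =
      ∑ l ∈ range (min j k + 1), if g ∈ minReps n l then
        (n - j).choose (k - l) * (n - k).choose (j - l) * (n + l - j - k)! * 2 ^ (n + l - j - k)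
      else 0 := by
  rw [card_eq_sum_card_fiberwise (f := overlapLen j k g)
    fun u _ => mem_range.2 (Nat.lt_succ_of_le (overlapLen_le hj hk))]
  exact sum_congr rfl fun l hl =>
    card_filter_overlapLen_eq hj hk g (Nat.lt_succ_iff.1 (mem_range.1 hl))

end Bgroup

/-- Multiplication formula in `ℚ[B_n]`:
`x_j * x_k = ∑_{l=0}^{min(j,k)} (n-j choose k-l)(n-k choose j-l)(n-j-k+l)! 2^(n-j-k+l) x_l`,
where terms with `n-j-k+l < 0` vanish. -/
theorem xB_mul_xB (n j k : ℕ) (hj : j ≤ n) (hk : k ≤ n) :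
    xB n j * xB n k =
      ∑ l ∈ Finset.range (min j k + 1),
        (if j + k ≤ n + l then
            (((n - j).choose (k - l) * (n - k).choose (j - l) *
              Nat.factorial (n + l - j - k) * 2 ^ (n + l - j - k) : ℕ) : ℚ)
          else 0) • xB n l := by
  refine MonoidAlgebra.coeff_injective (Finsupp.ext fun g => ?_)
  rw [Bgroup.xB_eq_sum, Bgroup.xB_eq_sum, coeff_sum_single_mul_sum_single,
    Bgroup.card_inv_mul_mem_minReps hj hk g]
  simp only [MonoidAlgebra.coeff_sum, Finsupp.finsetSum_apply, Nat.cast_sum]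
  refine sum_congr rfl fun l hl => ?_
  rw [MonoidAlgebra.coeff_smul_apply, Bgroup.xB_eq_sum, coeff_sum_single_one, smul_eq_mul]
  have hlk : l ≤ min j k := Nat.lt_succ_iff.1 (mem_range.1 hl)
  split_ifs with hg hjk
  · simp
  · rw [Nat.choose_eq_zero_of_lt (by omega : n - j < k - l)]
    simp
  · simp
  · simp
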